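/- The functions u₁ and u₂ are linearly independent over ℂ: if c₁ u₁(x) + c₂ u₂(x) = 0 for all x ∈ [0,a], then c₁ = c₂ = 0. -/

import Mathlib

open MeasureTheory Set Filter

/-- The sequence X̃^(n): X̃^(0) ≡ 1; for n ≥ 1, X̃^(n)(x) = n ∫₀ˣ X̃^(n-1)(ξ) dξ
if n is even, and X̃^(n)(x) = n ∫₀ˣ X̃^(n-1)(ξ) q(ξ) dξ if n is odd. -/
noncomputable def Xtilde (q : ℝ → ℂ) : ℕ → ℝ → ℂ
  | 0 => fun _ => 1
  | n + 1 => fun x => ((n + 1 : ℕ) : ℂ) *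
      ∫ ξ in (0:ℝ)..x, Xtilde q n ξ * (if Even (n + 1) then 1 else q ξ)

/-- The sequence X^(n): X^(0) ≡ 1; for n ≥ 1, X^(n)(x) = n ∫₀ˣ X^(n-1)(ξ) q(ξ) dξ
if n is even, and X^(n)(x) = n ∫₀ˣ X^(n-1)(ξ) dξ if n is odd. -/
noncomputable def Xup (q : ℝ → ℂ) : ℕ → ℝ → ℂ
  | 0 => fun _ => 1
  | n + 1 => fun x => ((n + 1 : ℕ) : ℂ) *
      ∫ ξ in (0:ℝ)..x, Xup q n ξ * (if Even (n + 1) then q ξ else 1)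

/-- u₁(x) = Σ_{even n ≥ 0} X̃^(n)(x)/n!, written as a sum over even indices n = 2k. -/
noncomputable def u₁ (q : ℝ → ℂ) (x : ℝ) : ℂ :=
  ∑' k : ℕ, Xtilde q (2 * k) x / (Nat.factorial (2 * k) : ℂ)

/-- u₂(x) = Σ_{odd n ≥ 1} X^(n)(x)/n!, written as a sum over odd indices n = 2k+1. -/
noncomputable def u₂ (q : ℝ → ℂ) (x : ℝ) : ℂ :=
  ∑' k : ℕ, Xup q (2 * k + 1) x / (Nat.factorial (2 * k + 1) : ℂ)

/-
At `x = 0` every term but the first vanishes, so `u₁ 0 = 1` and `u₂ 0 = 0`, which forces `c₁ = 0`.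
To see that `u₂` does not vanish identically, bound `‖q‖ ≤ M` on `[0,a]`; since `X^(2k+1)` involves `k`
factors of `q`, induction gives `‖X^(2k+1)(x)‖ ≤ M^k x^(2k+1)`, so `u₂ x = x + O(x³)` is nonzero
for small `x > 0`.
-/

open Topology

lemma Xtilde_succ_apply_zero (q : ℝ → ℂ) (n : ℕ) : Xtilde q (n + 1) 0 = 0 := by
  simp [Xtilde]

lemma Xup_succ_apply_zero (q : ℝ → ℂ) (n : ℕ) : Xup q (n + 1) 0 = 0 := by
  simp [Xup]

lemma Xup_one (q : ℝ → ℂ) (x : ℝ) : Xup q 1 x = x := by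
  simp [Xup]

lemma u₁_zero (q : ℝ → ℂ) : u₁ q 0 = 1 := by
  rw [u₁, tsum_eq_single 0]
  · simp [Xtilde]
  · intro k hk
    obtain ⟨m, hm⟩ : ∃ m, 2 * k = m + 1 := ⟨2 * k - 1, by omega⟩
    rw [hm, Xtilde_succ_apply_zero, zero_div]

lemma u₂_zero (q : ℝ → ℂ) : u₂ q 0 = 0 := by
  simp [u₂, Xup_succ_apply_zero]

lemma norm_natCast_succ_mul_integral_le {f : ℝ → ℂ} {n : ℕ} {B x : ℝ} (hx : 0 ≤ x)
    (hf : ∀ ξ ∈ Ioc 0 x, ‖f ξ‖ ≤ B * ξ ^ n) :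
    ‖((n + 1 : ℕ) : ℂ) * ∫ ξ in (0:ℝ)..x, f ξ‖ ≤ B * x ^ (n + 1) := by
  have hint : ‖∫ ξ in (0:ℝ)..x, f ξ‖ ≤ ∫ ξ in (0:ℝ)..x, B * ξ ^ n :=
    intervalIntegral.norm_integral_le_of_norm_le hx (ae_of_all _ hf)
      ((by fun_prop : Continuous fun ξ : ℝ => B * ξ ^ n).intervalIntegrable _ _)
  rw [intervalIntegral.integral_const_mul, integral_pow] at hint
  rw [norm_mul, Complex.norm_natCast]
  calc ((n + 1 : ℕ) : ℝ) * ‖∫ ξ in (0:ℝ)..x, f ξ‖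
      ≤ ((n + 1 : ℕ) : ℝ) * (B * ((x ^ (n + 1) - 0 ^ (n + 1)) / (n + 1))) := by gcongr
    _ = B * x ^ (n + 1) := by field_simp; push_cast; ring

lemma norm_Xup_le {q : ℝ → ℂ} {a M : ℝ} (hqM : ∀ ξ ∈ Icc 0 a, ‖q ξ‖ ≤ M) :
    ∀ (n : ℕ), ∀ x ∈ Icc 0 a, ‖Xup q n x‖ ≤ M ^ (n / 2) * x ^ n
  | 0, x, _ => by simp [Xup]
  | n + 1, x, hx => by
    refine norm_natCast_succ_mul_integral_le hx.1 fun ξ hξ => ?_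
    have hξa : ξ ∈ Icc 0 a := ⟨hξ.1.le, hξ.2.trans hx.2⟩
    have ih := norm_Xup_le hqM n ξ hξa
    rw [norm_mul]
    split_ifs with heven
    · have hdiv : (n + 1) / 2 = n / 2 + 1 := by rw [Nat.even_iff] at heven; omega
      calc ‖Xup q n ξ‖ * ‖q ξ‖ ≤ M ^ (n / 2) * ξ ^ n * M :=
            mul_le_mul ih (hqM ξ hξa) (norm_nonneg _) ((norm_nonneg _).trans ih)
        _ = M ^ ((n + 1) / 2) * ξ ^ n := by rw [hdiv]; ring
    · have hdiv : (n + 1) / 2 = n / 2 := by rw [Nat.not_even_iff_odd, Nat.odd_iff] at heven; omega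
      simpa [hdiv] using ih

lemma norm_Xup_odd_div_factorial_le {q : ℝ → ℂ} {a M x : ℝ}
    (hqM : ∀ ξ ∈ Icc 0 a, ‖q ξ‖ ≤ M) (hx : x ∈ Icc 0 a) (k : ℕ) :
    ‖Xup q (2 * k + 1) x / ((2 * k + 1).factorial : ℂ)‖ ≤ x * (M * x ^ 2) ^ k := by
  have hbound := norm_Xup_le hqM (2 * k + 1) x hx
  rw [show (2 * k + 1) / 2 = k by omega] at hbound
  rw [norm_div, Complex.norm_natCast]
  calc ‖Xup q (2 * k + 1) x‖ / ((2 * k + 1).factorial : ℝ) ≤ ‖Xup q (2 * k + 1) x‖ :=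
        div_le_self (norm_nonneg _) (Nat.one_le_cast.mpr (Nat.factorial_pos _))
    _ ≤ M ^ k * x ^ (2 * k + 1) := hbound
    _ = x * (M * x ^ 2) ^ k := by ring

lemma norm_u₂_sub_le {q : ℝ → ℂ} {a M x : ℝ} (hqM : ∀ ξ ∈ Icc 0 a, ‖q ξ‖ ≤ M)
    (hx : x ∈ Icc 0 a) (hr : M * x ^ 2 < 1) :
    ‖u₂ q x - x‖ ≤ x * (M * x ^ 2) / (1 - M * x ^ 2) := by
  have hM : 0 ≤ M := (norm_nonneg _).trans (hqM 0 ⟨le_rfl, hx.1.trans hx.2⟩)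
  have hterm := norm_Xup_odd_div_factorial_le hqM hx
  set r := M * x ^ 2
  have hr0 : 0 ≤ r := by positivity
  have hsum : Summable fun k : ℕ => Xup q (2 * k + 1) x / ((2 * k + 1).factorial : ℂ) :=
    Summable.of_norm_bounded ((summable_geometric_of_lt_one hr0 hr).mul_left x) hterm
  have htail : HasSum (fun k : ℕ => x * r ^ (k + 1)) (x * r / (1 - r)) := by
    rw [div_eq_mul_inv]
    simpa only [pow_succ', mul_assoc] using (hasSum_geometric_of_lt_one hr0 hr).mul_left (x * r)
  rw [u₂, hsum.tsum_eq_zero_add]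
  simpa [Xup_one] using tsum_of_norm_bounded htail fun k => hterm (k + 1)

lemma u₂_ne_zero {q : ℝ → ℂ} {a M x : ℝ} (hqM : ∀ ξ ∈ Icc 0 a, ‖q ξ‖ ≤ M)
    (hx0 : 0 < x) (hxa : x ≤ a) (hr : M * x ^ 2 < 1 / 2) : u₂ q x ≠ 0 := by
  intro hzero
  have hbound := norm_u₂_sub_le hqM ⟨hx0.le, hxa⟩ (by linarith)
  rw [hzero, zero_sub, norm_neg, Complex.norm_real, Real.norm_of_nonneg hx0.le,
    le_div_iff₀ (by linarith)] at hbound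
  nlinarith

/-- u₁ and u₂ are linearly independent over ℂ: if
c₁ u₁(x) + c₂ u₂(x) = 0 for all x ∈ [0,a], then c₁ = c₂ = 0. -/
theorem stmt_9 (a : ℝ) (ha : 0 < a) (q : ℝ → ℂ) (hq : ContinuousOn q (Set.Icc 0 a))
    (c₁ c₂ : ℂ) (h : ∀ x ∈ Set.Icc 0 a, c₁ * u₁ q x + c₂ * u₂ q x = 0) :
    c₁ = 0 ∧ c₂ = 0 := by
  have hc₁ : c₁ = 0 := by simpa [u₁_zero, u₂_zero] using h 0 ⟨le_rfl, ha.le⟩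
  refine ⟨hc₁, ?_⟩
  obtain ⟨M, hqM⟩ := isCompact_Icc.exists_bound_of_continuousOn hq
  have hsmall : ∀ᶠ x in 𝓝 (0 : ℝ), x < a ∧ M * x ^ 2 < 1 / 2 := by
    have hlim : Tendsto (fun x : ℝ => M * x ^ 2) (𝓝 0) (𝓝 0) := by
      simpa using ((continuous_pow 2).const_mul M).tendsto 0
    exact (eventually_lt_nhds ha).and (hlim.eventually (eventually_lt_nhds (by norm_num)))
  obtain ⟨x, ⟨hxa, hr⟩, hx0⟩ :=
    ((hsmall.filter_mono nhdsWithin_le_nhds).and (self_mem_nhdsWithin (s := Ioi 0))).exists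
  simpa [hc₁, u₂_ne_zero hqM hx0 hxa.le hr] using h x ⟨le_of_lt hx0, hxa.le⟩
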